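/- In the reachability layering of a digraph, every terminal pair is served within two consecutive layers: if s, t ∈ V* and E* contains a directed s–t path, then there exists an index j ≥ 0 such that E* contains a directed s–t path all of whose vertices lie in L_j ∪ L_{j+1}. -/

import Mathlib

/-!
**Statement 3.** In the reachability layering of a digraph in which every vertex
lies in some layer, every terminal pair is served within two consecutive layers:
if `E*` contains a directed `s`–`t` path, then there is an index `j ≥ 0` such that
`E*` contains a directed `s`–`t` path all of whose vertices lie in `L_j ∪ L_{j+1}`.
-/

/-- Reachability via directed paths using the edges of `E`. -/
def Reach {V : Type*} (E : Set (V × V)) (u w : V) : Prop :=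
  Relation.ReflTransGen (fun a b => (a, b) ∈ E) u w

/-- The reachability layering of the digraph with edge set `E`, started at `v0`:
`L₀` is the set of vertices reachable from `v0`; for odd `j ≥ 1`, `L_j` is the set
of yet-unlayered vertices that can reach `L_{j-1}`; for even `j ≥ 2`, `L_j` is the
set of yet-unlayered vertices reachable from `L_{j-1}`. -/
def layer {V : Type*} (E : Set (V × V)) (v0 : V) : ℕ → Set V
  | 0 => {v | Reach E v0 v}
  | (j + 1) =>
      {v | (∀ j' ≤ j, v ∉ layer E v0 j') ∧
        (if Odd (j + 1) then
          ∃ w ∈ layer E v0 j, Reach E v w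
        else
          ∃ w ∈ layer E v0 j, Reach E w v)}

/-!
Along a directed `s`–`t` path any two vertices are comparable under reachability. The layering
is built so that a vertex comparable with a vertex of `L_m` already lies in some `L_j` with
`j ≤ m + 1`; as layers are disjoint, all vertices of the path lie in `L_m ∪ L_{m+1}`, where `m`
is the least layer index met by the path.
-/

theorem Relation.ReflTransGen.exists_isChain_pairwise {α : Type*} {r : α → α → Prop}
    {a b : α} (h : Relation.ReflTransGen r a b) :
    ∃ l : List α, l ≠ [] ∧ l.IsChain r ∧ l.head? = some a ∧ l.getLast? = some b ∧
      l.Pairwise (Relation.ReflTransGen r) := by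
  obtain ⟨l, hchain, hlast⟩ := List.exists_isChain_cons_of_relationReflTransGen h
  refine ⟨a :: l, List.cons_ne_nil a l, hchain, rfl, ?_, ?_⟩
  · rw [List.getLast?_eq_some_getLast (List.cons_ne_nil a l), hlast]
  · exact (hchain.imp fun _ _ => Relation.ReflTransGen.single).pairwise

theorem List.Pairwise.symmGen_of_mem {α : Type*} {r : α → α → Prop} [Std.Refl r]
    {l : List α} (h : l.Pairwise r) {a b : α} (ha : a ∈ l) (hb : b ∈ l) :
    Relation.SymmGen r a b :=
  (h.imp Relation.SymmGen.of_rel).forall_of_forall (fun _ _ => Relation.SymmGen.rfl) ha hb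

section Layer

variable {V : Type*} {E : Set (V × V)} {v0 : V}

theorem mem_layer_zero {v : V} : v ∈ layer E v0 0 ↔ Reach E v0 v := by
  simp only [layer, Set.mem_ofPred_eq]

theorem mem_layer_succ {j : ℕ} {v : V} :
    v ∈ layer E v0 (j + 1) ↔ (∀ j' ≤ j, v ∉ layer E v0 j') ∧
      (if Odd (j + 1) then ∃ w ∈ layer E v0 j, Reach E v w
       else ∃ w ∈ layer E v0 j, Reach E w v) := by
  simp only [layer, Set.mem_ofPred_eq]

theorem not_mem_layer_of_lt {v : V} {j k : ℕ} (hk : v ∈ layer E v0 k) (hjk : j < k) :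
    v ∉ layer E v0 j := by
  obtain ⟨k, rfl⟩ := Nat.exists_eq_add_of_lt hjk
  exact (mem_layer_succ.1 hk).1 j (by omega)

theorem exists_mem_layer_le_succ {v : V} {j : ℕ}
    (h : if Odd (j + 1) then ∃ w ∈ layer E v0 j, Reach E v w
      else ∃ w ∈ layer E v0 j, Reach E w v) :
    ∃ j' ≤ j + 1, v ∈ layer E v0 j' := by
  by_contra! hv
  exact hv (j + 1) le_rfl (mem_layer_succ.2 ⟨fun j' hj' => hv j' (by omega), h⟩)

theorem exists_mem_layer_le_succ_of_reach_from {a b : V} {m : ℕ} (ha : a ∈ layer E v0 m)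
    (hab : Reach E a b) : ∃ j ≤ m + 1, b ∈ layer E v0 j := by
  rcases Nat.even_or_odd m with hm | hm
  · rcases m with _ | m
    · exact ⟨0, by omega, mem_layer_zero.2 ((mem_layer_zero.1 ha).trans hab)⟩
    · have hodd : ¬ Odd (m + 1) := Nat.not_odd_iff_even.2 hm
      obtain ⟨-, hw⟩ := mem_layer_succ.1 ha
      rw [if_neg hodd] at hw
      obtain ⟨w, hw, hwa⟩ := hw
      obtain ⟨j, hj, hb⟩ := exists_mem_layer_le_succ
        (by rw [if_neg hodd]; exact ⟨w, hw, hwa.trans hab⟩)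
      exact ⟨j, by omega, hb⟩
  · refine exists_mem_layer_le_succ ?_
    rw [if_neg (Nat.not_odd_iff_even.2 hm.add_one)]
    exact ⟨a, ha, hab⟩

theorem exists_mem_layer_le_succ_of_reach_to {a b : V} {m : ℕ} (ha : a ∈ layer E v0 m)
    (hba : Reach E b a) : ∃ j ≤ m + 1, b ∈ layer E v0 j := by
  rcases Nat.even_or_odd m with hm | hm
  · exact exists_mem_layer_le_succ (by rw [if_pos hm.add_one]; exact ⟨a, ha, hba⟩)
  · obtain ⟨m, rfl⟩ := Nat.exists_eq_add_one_of_ne_zero hm.pos.ne'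
    obtain ⟨-, hw⟩ := mem_layer_succ.1 ha
    rw [if_pos hm] at hw
    obtain ⟨w, hw, haw⟩ := hw
    obtain ⟨j, hj, hb⟩ := exists_mem_layer_le_succ
      (by rw [if_pos hm]; exact ⟨w, hw, hba.trans haw⟩)
    exact ⟨j, by omega, hb⟩

theorem le_succ_of_symmGen_reach {a b : V} {m k : ℕ} (ha : a ∈ layer E v0 m)
    (hb : b ∈ layer E v0 k) (hab : Relation.SymmGen (Reach E) a b) : k ≤ m + 1 := by
  obtain ⟨j, hj, hbj⟩ := hab.elim (exists_mem_layer_le_succ_of_reach_from ha)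
    (exists_mem_layer_le_succ_of_reach_to ha)
  by_contra! hk
  exact not_mem_layer_of_lt hb (by omega) hbj

end Layer

theorem stmt_3 {V : Type*} (E : Set (V × V)) (v0 : V)
    (hcov : ∀ v : V, ∃ j, v ∈ layer E v0 j)
    (s t : V) (hst : Reach E s t) :
    ∃ j : ℕ, ∃ l : List V, l ≠ [] ∧
      l.Chain' (fun a b => (a, b) ∈ E) ∧
      l.head? = some s ∧ l.getLast? = some t ∧
      ∀ v ∈ l, v ∈ layer E v0 j ∪ layer E v0 (j + 1) := by
  obtain ⟨l, hne, hchain, hhead, hlast, hpw⟩ :=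
    Relation.ReflTransGen.exists_isChain_pairwise hst
  choose f hf using hcov
  obtain ⟨a, ha, hmin⟩ :=
    Set.exists_min_image _ f (List.finite_toSet l) (List.exists_mem_of_ne_nil l hne)
  refine ⟨f a, l, hne, hchain, hhead, hlast, fun v hv => ?_⟩
  have hle : f v ≤ f a + 1 := le_succ_of_symmGen_reach (hf a) (hf v) (hpw.symmGen_of_mem ha hv)
  obtain h | h : f v = f a ∨ f v = f a + 1 := by have := hmin v hv; omega
  exacts [.inl (h ▸ hf v), .inr (h ▸ hf v)]
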